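/- Let ξ_i(x₁,…,xₙ,y₁,…,y_m) be a conjunction of atoms A_i^1, …, A_i^{l_i}, each either a divisibility constraint x_j | y_k or an atomic Presburger formula over ℕ. For all assignments X : {x₁,…,xₙ} → ℕ and Y : {y₁,…,y_m} → ℕ: ξ_i(X,Y) is true if and only if there exists a simple configuration C of TA_{ξ_i}[X] with C(start_{A_i^1}) > 0 and C(t_i) = Y(y_i) for all 1 ≤ i ≤ m, from which end_{A_i^{l_i}} can be covered. -/
import Mathlib


namespace ThresholdAutomata

/-- A comparison operator `⋈ ∈ {<, ≤, =, >, ≥}`. -/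
inductive CmpOp : Type
  | lt | le | eq | gt | ge

/-- Interpretation of a comparison operator on `ℕ`. -/
def CmpOp.holds : CmpOp → ℕ → ℕ → Prop
  | .lt, a, b => a < b
  | .le, a, b => a ≤ b
  | .eq, a, b => a = b
  | .gt, a, b => a > b
  | .ge, a, b => a ≥ b

/-- A linear polynomial with `ℕ` coefficients over the variables
`x₁, …, xₙ, y₁, …, y_m`. -/
structure LinPoly (n m : ℕ) where
  xcoeff : Fin n → ℕ
  ycoeff : Fin m → ℕ
  const : ℕ

/-- The value of a linear polynomial at assignments `X` and `Y`. -/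
def LinPoly.eval {n m : ℕ} (f : LinPoly n m) (X : Fin n → ℕ) (Y : Fin m → ℕ) : ℕ :=
  ∑ i, f.xcoeff i * X i + ∑ j, f.ycoeff j * Y j + f.const

/-- An atom: either a divisibility constraint `x_j | y_k` or an atomic
Presburger formula `f(x,y) ⋈ g(x,y)`. -/
inductive Atom (n m : ℕ) : Type
  | div (j : Fin n) (k : Fin m)
  | cmp (f g : LinPoly n m) (op : CmpOp)

/-- Truth of an atom at assignments `X`, `Y` over `ℕ`. -/
def Atom.holds {n m : ℕ} (X : Fin n → ℕ) (Y : Fin m → ℕ) : Atom n m → Prop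
  | .div j k => X j ∣ Y k
  | .cmp f g op => op.holds (f.eval X Y) (g.eval X Y)

/-- Whether an atom is a divisibility constraint (only those have an
associated environment variable `d_A`). -/
def Atom.IsDiv {n m : ℕ} : Atom n m → Prop
  | .div _ _ => True
  | .cmp _ _ _ => False

/-- A configuration of the chained sketch `TA_{ξ_i}` built from the atoms
`A_i^1, …, A_i^l` (after substituting values for the indeterminates).
The gadget of the `a`-th atom has the locations `(a, 0) = start_{A_i^a}`,
`(a, 1) = ℓ_{A_i^a}`, `(a, 2) = end_{A_i^a}` and the shared variable `v a`;
the environment variables are `t₁, …, t_m`, one `d a` per (divisibility) atom,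
and `z`, the total number of processes (the number function is `N = z`). -/
structure Config (l m : ℕ) where
  κ : Fin l × Fin 3 → ℕ
  v : Fin l → ℕ
  t : Fin m → ℕ
  d : Fin l → ℕ
  z : ℕ

/-- Moving one process from location `p` to location `q`. -/
def move {α : Type*} [DecidableEq α] (κ : α → ℕ) (p q : α) : α → ℕ :=
  Function.update (Function.update κ p (κ p - 1)) q (κ q + 1)

/-- The guard of the rule from `ℓ_A` to `end_A` for the atom `A` at position `a`:
`v_A = s_j·d_A ∧ v_A = t_k` in the divisibility case and
`v_A = f(s,t) ∧ v_A ⋈ g(s,t)` in the atomic case, where the indeterminates `s`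
have the values `X`. -/
def guardHolds {n m l : ℕ} (atoms : Fin l → Atom n m) (X : Fin n → ℕ)
    (a : Fin l) (C : Config l m) : Prop :=
  match atoms a with
  | .div j k => C.v a = X j * C.d a ∧ C.v a = C.t k
  | .cmp f g op => C.v a = f.eval X C.t ∧ op.holds (C.v a) (g.eval X C.t)

/-- The rules of `TA_{ξ_i}`: for each atom position `a`, the two unguarded rules
from `start_{A^a}` to `ℓ_{A^a}` (`inc a` increments `v_A`, `skip a` increments
nothing), the guarded non-incrementing rule `fin a` from `ℓ_{A^a}` to `end_{A^a}`,
and the unguarded non-incrementing linking rule `link a` from `end_{A^a}` to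
`start_{A^{a+1}}`. -/
inductive Rule (l : ℕ) : Type
  | inc (a : Fin l)
  | skip (a : Fin l)
  | fin (a : Fin l)
  | link (a : Fin l)

/-- A rule belongs to the gadget `TA_A` of the atom at position `a`
(the linking rules belong to no gadget). -/
def Rule.belongsTo {l : ℕ} : Rule l → Fin l → Prop
  | .inc b, a => b = a
  | .skip b, a => b = a
  | .fin b, a => b = a
  | .link _, _ => False

/-- `Fires atoms X r C C'` says that in `TA_{ξ_i}[X]` the rule `r` is enabled at
the configuration `C` and firing it produces the configuration `C'`. -/
def Fires {n m l : ℕ} (atoms : Fin l → Atom n m) (X : Fin n → ℕ) :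
    Rule l → Config l m → Config l m → Prop
  | .inc a, C, C' => 0 < C.κ (a, 0) ∧
      C' = ⟨move C.κ (a, 0) (a, 1), Function.update C.v a (C.v a + 1), C.t, C.d, C.z⟩
  | .skip a, C, C' => 0 < C.κ (a, 0) ∧
      C' = ⟨move C.κ (a, 0) (a, 1), C.v, C.t, C.d, C.z⟩
  | .fin a, C, C' => 0 < C.κ (a, 1) ∧ guardHolds atoms X a C ∧
      C' = ⟨move C.κ (a, 1) (a, 2), C.v, C.t, C.d, C.z⟩
  | .link a, C, C' => ∃ h : (a : ℕ) + 1 < l, 0 < C.κ (a, 2) ∧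
      C' = ⟨move C.κ (a, 2) (⟨(a : ℕ) + 1, h⟩, 0), C.v, C.t, C.d, C.z⟩

/-- The step relation of `TA_{ξ_i}[X]`. -/
def Step {n m l : ℕ} (atoms : Fin l → Atom n m) (X : Fin n → ℕ)
    (C C' : Config l m) : Prop :=
  ∃ r : Rule l, Fires atoms X r C C'

/-- The relation `C ⪯_A D` for the atom `A` at position `a`: `C` and `D` agree on
`v_A`, on `d_A` (when `A` is a divisibility atom, so that `d_A` exists) and on
`t₁, …, t_m`, and `C(v) ≤ D(v)` for `v ∈ {start_A, ℓ_A, end_A, z}`. -/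
def Pre {n m l : ℕ} (atoms : Fin l → Atom n m) (a : Fin l)
    (C D : Config l m) : Prop :=
  C.v a = D.v a ∧ ((atoms a).IsDiv → C.d a = D.d a) ∧ (∀ i, C.t i = D.t i) ∧
  (∀ pos : Fin 3, C.κ (a, pos) ≤ D.κ (a, pos)) ∧ C.z ≤ D.z


/-- `C` is a configuration: the total number of processes is `z`. -/
def Config.valid {l m : ℕ} (C : Config l m) : Prop :=
  (∑ q : Fin l × Fin 3, C.κ q) = C.z

/-- A simple configuration: all processes are in exactly one location and all
shared variables have value `0`. -/
def Simple {l m : ℕ} (C : Config l m) : Prop :=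
  C.valid ∧ (∀ a : Fin l, C.v a = 0) ∧
  ∃ q : Fin l × Fin 3, 0 < C.κ q ∧ ∀ q' : Fin l × Fin 3, q' ≠ q → C.κ q' = 0

/-- `C` can cover the location `q` in `TA_{ξ_i}[X]`. -/
def Covers {n m l : ℕ} (atoms : Fin l → Atom n m) (X : Fin n → ℕ)
    (C : Config l m) (q : Fin l × Fin 3) : Prop :=
  ∃ C' : Config l m, Relation.ReflTransGen (Step atoms X) C C' ∧ 0 < C'.κ q

section Aux

variable {n m l : ℕ}

lemma Config.ext' {C D : Config l m} (h1 : C.κ = D.κ) (h2 : C.v = D.v)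
    (h3 : C.t = D.t) (h4 : C.d = D.d) (h5 : C.z = D.z) : C = D := by
  cases C; cases D; simp_all

lemma move_apply {α : Type*} [DecidableEq α] (κ : α → ℕ) (p q r : α) :
    move κ p q r = if r = q then κ q + 1 else if r = p then κ p - 1 else κ r := by
  simp only [move, Function.update_apply]

lemma guard_div {atoms : Fin l → Atom n m} {X : Fin n → ℕ} {a : Fin l}
    {j : Fin n} {k : Fin m} (hA : atoms a = .div j k) (C : Config l m) :
    guardHolds atoms X a C ↔ (C.v a = X j * C.d a ∧ C.v a = C.t k) := by
  unfold guardHolds; rw [hA]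

lemma guard_cmp {atoms : Fin l → Atom n m} {X : Fin n → ℕ} {a : Fin l}
    {f g : LinPoly n m} {op : CmpOp} (hA : atoms a = .cmp f g op) (C : Config l m) :
    guardHolds atoms X a C ↔ (C.v a = f.eval X C.t ∧ op.holds (C.v a) (g.eval X C.t)) := by
  unfold guardHolds; rw [hA]

lemma guard_congr (atoms : Fin l → Atom n m) (X : Fin n → ℕ) (a : Fin l)
    {C D : Config l m} (hv : C.v a = D.v a) (ht : C.t = D.t) (hd : C.d a = D.d a)
    (h : guardHolds atoms X a C) : guardHolds atoms X a D := by
  cases hA : atoms a with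
  | div j k =>
      rw [guard_div hA] at h ⊢
      exact ⟨by rw [← hv, ← hd]; exact h.1, by rw [← hv, ← ht]; exact h.2⟩
  | cmp f g op =>
      rw [guard_cmp hA] at h ⊢
      rw [← hv, ← ht]; exact h

/-- Firing `inc a` `j` times. -/
lemma reach_incs (atoms : Fin l → Atom n m) (X : Fin n → ℕ) (a : Fin l)
    (C : Config l m) (j : ℕ) (hj : j ≤ C.κ (a, 0)) :
    Relation.ReflTransGen (Step atoms X) C
      ⟨fun q => if q = (a, 0) then C.κ (a, 0) - j else if q = (a, 1) then C.κ (a, 1) + j else C.κ q,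
       Function.update C.v a (C.v a + j), C.t, C.d, C.z⟩ := by
  induction j with
  | zero =>
      have : (⟨fun q => if q = (a, 0) then C.κ (a, 0) - 0 else if q = (a, 1) then C.κ (a, 1) + 0 else C.κ q,
        Function.update C.v a (C.v a + 0), C.t, C.d, C.z⟩ : Config l m) = C := by
        refine Config.ext' ?_ ?_ rfl rfl rfl
        · funext q; dsimp only; split_ifs <;> simp_all
        · simp
      rw [this]
  | succ j ih =>
      have hj' : j ≤ C.κ (a, 0) := by omega
      refine (ih hj').tail ⟨Rule.inc a, ?_, ?_⟩
      · simp; omega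
      · refine Config.ext' ?_ ?_ rfl rfl rfl
        · funext q
          dsimp only
          rw [move_apply]
          split_ifs <;> first | omega | simp_all | (simp_all; omega)
        · funext b
          simp only [Function.update_apply]
          split_ifs <;> first | omega | simp_all

/-- Firing `skip a` `j` times. -/
lemma reach_skips (atoms : Fin l → Atom n m) (X : Fin n → ℕ) (a : Fin l)
    (C : Config l m) (j : ℕ) (hj : j ≤ C.κ (a, 0)) :
    Relation.ReflTransGen (Step atoms X) C
      ⟨fun q => if q = (a, 0) then C.κ (a, 0) - j else if q = (a, 1) then C.κ (a, 1) + j else C.κ q,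
       C.v, C.t, C.d, C.z⟩ := by
  induction j with
  | zero =>
      have : (⟨fun q => if q = (a, 0) then C.κ (a, 0) - 0 else if q = (a, 1) then C.κ (a, 1) + 0 else C.κ q,
        C.v, C.t, C.d, C.z⟩ : Config l m) = C := by
        refine Config.ext' ?_ rfl rfl rfl rfl
        funext q; dsimp only; split_ifs <;> simp_all
      rw [this]
  | succ j ih =>
      have hj' : j ≤ C.κ (a, 0) := by omega
      refine (ih hj').tail ⟨Rule.skip a, ?_, ?_⟩
      · simp; omega
      · refine Config.ext' ?_ rfl rfl rfl rfl
        funext q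
        dsimp only
        rw [move_apply]
        split_ifs <;> first | omega | simp_all | (simp_all; omega)

/-- Firing `fin a` `j` times. -/
lemma reach_fins (atoms : Fin l → Atom n m) (X : Fin n → ℕ) (a : Fin l)
    (C : Config l m) (j : ℕ) (hj : j ≤ C.κ (a, 1)) (hg : guardHolds atoms X a C) :
    Relation.ReflTransGen (Step atoms X) C
      ⟨fun q => if q = (a, 1) then C.κ (a, 1) - j else if q = (a, 2) then C.κ (a, 2) + j else C.κ q,
       C.v, C.t, C.d, C.z⟩ := by
  induction j with
  | zero =>
      have : (⟨fun q => if q = (a, 1) then C.κ (a, 1) - 0 else if q = (a, 2) then C.κ (a, 2) + 0 else C.κ q,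
        C.v, C.t, C.d, C.z⟩ : Config l m) = C := by
        refine Config.ext' ?_ rfl rfl rfl rfl
        funext q; dsimp only; split_ifs <;> simp_all
      rw [this]
  | succ j ih =>
      have hj' : j ≤ C.κ (a, 1) := by omega
      refine (ih hj').tail ⟨Rule.fin a, ?_, ?_, ?_⟩
      · simp; omega
      · exact guard_congr atoms X a rfl rfl rfl hg
      · refine Config.ext' ?_ rfl rfl rfl rfl
        funext q
        dsimp only
        rw [move_apply]
        split_ifs <;> first | omega | simp_all | (simp_all; omega)

/-- Firing `link a` `j` times. -/
lemma reach_links (atoms : Fin l → Atom n m) (X : Fin n → ℕ) (a : Fin l)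
    (hlt : (a : ℕ) + 1 < l)
    (C : Config l m) (j : ℕ) (hj : j ≤ C.κ (a, 2)) :
    Relation.ReflTransGen (Step atoms X) C
      ⟨fun q => if q = (a, 2) then C.κ (a, 2) - j
          else if q = ((⟨(a : ℕ) + 1, hlt⟩ : Fin l), 0) then C.κ (⟨(a : ℕ) + 1, hlt⟩, 0) + j
          else C.κ q,
       C.v, C.t, C.d, C.z⟩ := by
  have hne : ((a, 2) : Fin l × Fin 3) ≠ (⟨(a : ℕ) + 1, hlt⟩, 0) := by
    intro h
    have := congrArg (fun p => (p.1 : ℕ)) h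
    simp at this
  induction j with
  | zero =>
      have : (⟨fun q => if q = (a, 2) then C.κ (a, 2) - 0
          else if q = ((⟨(a : ℕ) + 1, hlt⟩ : Fin l), 0) then C.κ (⟨(a : ℕ) + 1, hlt⟩, 0) + 0
          else C.κ q, C.v, C.t, C.d, C.z⟩ : Config l m) = C := by
        refine Config.ext' ?_ rfl rfl rfl rfl
        funext q; dsimp only; split_ifs <;> simp_all
      rw [this]
  | succ j ih =>
      have hj' : j ≤ C.κ (a, 2) := by omega
      refine (ih hj').tail ⟨Rule.link a, hlt, ?_, ?_⟩
      · simp [hne]; omega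
      · refine Config.ext' ?_ rfl rfl rfl rfl
        funext q
        dsimp only
        rw [move_apply]
        split_ifs <;> first | omega | simp_all | (simp_all; omega)

end Aux
section Aux2

variable {n m l : ℕ}

lemma reach_of_eq {atoms : Fin l → Atom n m} {X : Fin n → ℕ} {C D : Config l m}
    (h : C = D) : Relation.ReflTransGen (Step atoms X) C D := h ▸ Relation.ReflTransGen.refl

lemma step_t {atoms : Fin l → Atom n m} {X : Fin n → ℕ} {C C' : Config l m}
    (h : Step atoms X C C') : C'.t = C.t := by
  obtain ⟨r, hf⟩ := h
  cases r with
  | inc a => obtain ⟨-, rfl⟩ := hf; rfl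
  | skip a => obtain ⟨-, rfl⟩ := hf; rfl
  | fin a => obtain ⟨-, -, rfl⟩ := hf; rfl
  | link a => obtain ⟨-, -, rfl⟩ := hf; rfl

lemma reach_t {atoms : Fin l → Atom n m} {X : Fin n → ℕ} {C C' : Config l m}
    (h : Relation.ReflTransGen (Step atoms X) C C') : C'.t = C.t := by
  induction h with
  | refl => rfl
  | tail _ hs ih => rw [step_t hs, ih]

lemma cover_invariant (atoms : Fin l → Atom n m) (X : Fin n → ℕ) (hl : 0 < l)
    (C : Config l m) (h0 : ∀ q : Fin l × Fin 3, 0 < C.κ q → q = (⟨0, hl⟩, 0))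
    {C' : Config l m} (hr : Relation.ReflTransGen (Step atoms X) C C') :
    ∀ (a : Fin l) (pos : Fin 3), 0 < C'.κ (a, pos) →
      (∀ b : Fin l, (b : ℕ) < (a : ℕ) →
        ∃ D, Relation.ReflTransGen (Step atoms X) C D ∧ guardHolds atoms X b D) ∧
      ((pos : ℕ) = 2 →
        ∃ D, Relation.ReflTransGen (Step atoms X) C D ∧ guardHolds atoms X a D) := by
  induction hr with
  | refl =>
      intro a pos hpos
      have hq := h0 _ hpos
      rw [Prod.mk.injEq] at hq
      constructor
      · intro b hb
        exfalso
        have : (a : ℕ) = 0 := by rw [hq.1]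
        omega
      · intro h2
        exfalso
        rw [hq.2] at h2
        simp at h2
  | @tail D E hCD hDE ih =>
      obtain ⟨r, hf⟩ := hDE
      cases r with
      | inc a' =>
          obtain ⟨hp, rfl⟩ := hf
          intro a pos hpos
          dsimp only at hpos
          rw [move_apply] at hpos
          split_ifs at hpos with h1 h2
          · rw [Prod.mk.injEq] at h1
            obtain ⟨rfl, rfl⟩ := h1
            exact ⟨(ih a 0 hp).1, by intro hx; simp at hx⟩
          · rw [Prod.mk.injEq] at h2
            obtain ⟨rfl, rfl⟩ := h2
            exact ih a 0 (by omega)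
          · exact ih a pos hpos
      | skip a' =>
          obtain ⟨hp, rfl⟩ := hf
          intro a pos hpos
          dsimp only at hpos
          rw [move_apply] at hpos
          split_ifs at hpos with h1 h2
          · rw [Prod.mk.injEq] at h1
            obtain ⟨rfl, rfl⟩ := h1
            exact ⟨(ih a 0 hp).1, by intro hx; simp at hx⟩
          · rw [Prod.mk.injEq] at h2
            obtain ⟨rfl, rfl⟩ := h2
            exact ih a 0 (by omega)
          · exact ih a pos hpos
      | fin a' =>
          obtain ⟨hp, hg, rfl⟩ := hf
          intro a pos hpos
          dsimp only at hpos
          rw [move_apply] at hpos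
          split_ifs at hpos with h1 h2
          · rw [Prod.mk.injEq] at h1
            obtain ⟨rfl, rfl⟩ := h1
            exact ⟨(ih a 1 hp).1, fun _ => ⟨D, hCD, hg⟩⟩
          · rw [Prod.mk.injEq] at h2
            obtain ⟨rfl, rfl⟩ := h2
            exact ih a 1 (by omega)
          · exact ih a pos hpos
      | link a' =>
          obtain ⟨hlt, hp, rfl⟩ := hf
          intro a pos hpos
          dsimp only at hpos
          rw [move_apply] at hpos
          split_ifs at hpos with h1 h2
          · rw [Prod.mk.injEq] at h1
            obtain ⟨rfl, rfl⟩ := h1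
            obtain ⟨hb, h2'⟩ := ih a' 2 hp
            constructor
            · intro b hbb
              have hbb' : (b : ℕ) < (a' : ℕ) + 1 := hbb
              rcases Nat.lt_or_ge (b : ℕ) (a' : ℕ) with hc | hc
              · exact hb b hc
              · have : b = a' := Fin.ext (by omega)
                subst this
                exact h2' rfl
            · intro hx; simp at hx
          · rw [Prod.mk.injEq] at h2
            obtain ⟨rfl, rfl⟩ := h2
            exact ih a 2 (by omega)
          · exact ih a pos hpos

end Aux2
section Aux3

variable {n m l : ℕ}

/-- The value that the shared variable `v_A` must take for the guard of the
atom at position `a` to hold (with `t = Y`). -/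
def tgt (atoms : Fin l → Atom n m) (X : Fin n → ℕ) (Y : Fin m → ℕ) (a : Fin l) : ℕ :=
  match atoms a with
  | .div _ k => Y k
  | .cmp f _ _ => f.eval X Y

lemma tgt_div {atoms : Fin l → Atom n m} (X : Fin n → ℕ) (Y : Fin m → ℕ) {a : Fin l}
    {j : Fin n} {k : Fin m} (hA : atoms a = .div j k) : tgt atoms X Y a = Y k := by
  unfold tgt; rw [hA]

lemma tgt_cmp {atoms : Fin l → Atom n m} (X : Fin n → ℕ) (Y : Fin m → ℕ) {a : Fin l}
    {f g : LinPoly n m} {op : CmpOp} (hA : atoms a = .cmp f g op) :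
    tgt atoms X Y a = f.eval X Y := by
  unfold tgt; rw [hA]

/-- Witness values for the environment variables `d_A`. -/
def dwit (atoms : Fin l → Atom n m) (X : Fin n → ℕ) (Y : Fin m → ℕ) (a : Fin l) : ℕ :=
  match atoms a with
  | .div j k => Y k / X j
  | .cmp _ _ _ => 0

lemma dwit_div {atoms : Fin l → Atom n m} (X : Fin n → ℕ) (Y : Fin m → ℕ) {a : Fin l}
    {j : Fin n} {k : Fin m} (hA : atoms a = .div j k) : dwit atoms X Y a = Y k / X j := by
  unfold dwit; rw [hA]

/-- The number of processes used in the forward construction. -/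
def KK (atoms : Fin l → Atom n m) (X : Fin n → ℕ) (Y : Fin m → ℕ) : ℕ :=
  (∑ a, tgt atoms X Y a) + 1

lemma tgt_le_KK (atoms : Fin l → Atom n m) (X : Fin n → ℕ) (Y : Fin m → ℕ) (a : Fin l) :
    tgt atoms X Y a ≤ KK atoms X Y := by
  have := Finset.single_le_sum (f := tgt atoms X Y) (fun b _ => Nat.zero_le _)
    (Finset.mem_univ a)
  unfold KK; omega

lemma KK_pos (atoms : Fin l → Atom n m) (X : Fin n → ℕ) (Y : Fin m → ℕ) :
    0 < KK atoms X Y := Nat.succ_pos _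

/-- The shared-variable values after the first `c` gadgets have been traversed. -/
def vfun (atoms : Fin l → Atom n m) (X : Fin n → ℕ) (Y : Fin m → ℕ) (c : ℕ) :
    Fin l → ℕ :=
  fun b => if (b : ℕ) < c then tgt atoms X Y b else 0

/-- All `KK` processes at `start` of gadget `i`. -/
def Sconf (atoms : Fin l → Atom n m) (X : Fin n → ℕ) (Y : Fin m → ℕ)
    (i : ℕ) (h : i < l) : Config l m :=
  ⟨fun q => if q = ((⟨i, h⟩ : Fin l), 0) then KK atoms X Y else 0,
   vfun atoms X Y i, Y, dwit atoms X Y, KK atoms X Y⟩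

/-- All `KK` processes at `end` of gadget `i`. -/
def Econf (atoms : Fin l → Atom n m) (X : Fin n → ℕ) (Y : Fin m → ℕ)
    (i : ℕ) (h : i < l) : Config l m :=
  ⟨fun q => if q = ((⟨i, h⟩ : Fin l), 2) then KK atoms X Y else 0,
   vfun atoms X Y (i + 1), Y, dwit atoms X Y, KK atoms X Y⟩

lemma guard_of (atoms : Fin l → Atom n m) (X : Fin n → ℕ) (Y : Fin m → ℕ)
    (a : Fin l) (C : Config l m) (hξa : (atoms a).holds X Y)
    (hv : C.v a = tgt atoms X Y a) (ht : C.t = Y) (hd : C.d a = dwit atoms X Y a) :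
    guardHolds atoms X a C := by
  cases hA : atoms a with
  | div j k =>
      rw [guard_div hA]
      have hdvd : X j ∣ Y k := by rw [hA] at hξa; simpa [Atom.holds] using hξa
      rw [hv, hd, ht, tgt_div X Y hA, dwit_div X Y hA]
      exact ⟨(Nat.mul_div_cancel' hdvd).symm, rfl⟩
  | cmp f g op =>
      rw [guard_cmp hA]
      rw [hA] at hξa
      simp only [Atom.holds] at hξa
      rw [hv, ht, tgt_cmp X Y hA]
      exact ⟨rfl, hξa⟩

lemma segment (atoms : Fin l → Atom n m) (X : Fin n → ℕ) (Y : Fin m → ℕ)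
    (hξ : ∀ a : Fin l, (atoms a).holds X Y) (i : ℕ) (h : i < l) :
    Relation.ReflTransGen (Step atoms X) (Sconf atoms X Y i h) (Econf atoms X Y i h) := by
  have hTK : tgt atoms X Y ⟨i, h⟩ ≤ KK atoms X Y := tgt_le_KK atoms X Y ⟨i, h⟩
  refine (reach_incs atoms X ⟨i, h⟩ (Sconf atoms X Y i h) (tgt atoms X Y ⟨i, h⟩) ?_).trans ?_
  · simp [Sconf]; omega
  refine (reach_skips atoms X ⟨i, h⟩ _ (KK atoms X Y - tgt atoms X Y ⟨i, h⟩) ?_).trans ?_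
  · simp [Sconf]
  refine (reach_fins atoms X ⟨i, h⟩ _ (KK atoms X Y) ?_ ?_).trans ?_
  · simp [Sconf]; omega
  · refine guard_of atoms X Y ⟨i, h⟩ _ (hξ _) ?_ rfl rfl
    simp [Sconf, vfun]
  · refine reach_of_eq (Config.ext' ?_ ?_ rfl rfl rfl)
    · funext q
      obtain ⟨b, pos⟩ := q
      dsimp only [Sconf, Econf]
      by_cases hb : b = (⟨i, h⟩ : Fin l)
      · subst hb
        fin_cases pos <;> simp <;> omega
      · simp [hb]
    · funext b
      dsimp only [Sconf, Econf]
      by_cases hba : b = (⟨i, h⟩ : Fin l)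
      · subst hba
        simp [vfun]
      · rw [Function.update_of_ne hba]
        have hbi : (b : ℕ) ≠ i := fun hh => hba (Fin.ext hh)
        simp only [vfun]
        split_ifs <;> omega

lemma linkseg (atoms : Fin l → Atom n m) (X : Fin n → ℕ) (Y : Fin m → ℕ)
    (i : ℕ) (h1 : i < l) (h2 : i + 1 < l) :
    Relation.ReflTransGen (Step atoms X) (Econf atoms X Y i h1) (Sconf atoms X Y (i + 1) h2) := by
  refine (reach_links atoms X ⟨i, h1⟩ h2 (Econf atoms X Y i h1) (KK atoms X Y) ?_).trans ?_
  · simp [Econf]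
  · refine reach_of_eq (Config.ext' ?_ rfl rfl rfl rfl)
    funext q
    obtain ⟨b, pos⟩ := q
    dsimp only [Sconf, Econf]
    have hne : ((⟨i, h1⟩ : Fin l)) ≠ (⟨i + 1, h2⟩ : Fin l) := by
      intro hh; rw [Fin.mk.injEq] at hh; omega
    by_cases hb : b = (⟨i, h1⟩ : Fin l)
    · subst hb
      fin_cases pos <;> simp [Fin.mk.injEq] <;> omega
    · by_cases hb' : b = (⟨i + 1, h2⟩ : Fin l)
      · subst hb'
        fin_cases pos <;> simp [Fin.mk.injEq] <;> omega
      · simp [hb, hb']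

lemma chain (atoms : Fin l → Atom n m) (X : Fin n → ℕ) (Y : Fin m → ℕ)
    (hl : 0 < l) (hξ : ∀ a : Fin l, (atoms a).holds X Y) :
    ∀ (i : ℕ) (h : i < l),
      Relation.ReflTransGen (Step atoms X) (Sconf atoms X Y 0 hl) (Sconf atoms X Y i h) := by
  intro i
  induction i with
  | zero => intro h; exact Relation.ReflTransGen.refl
  | succ i ih =>
      intro h
      have hi : i < l := by omega
      exact ((ih hi).trans (segment atoms X Y hξ i hi)).trans (linkseg atoms X Y i hi h)

end Aux3
/-- **Lemma 2**: let `ξ_i` be the conjunction of the atoms `A_i^1, …, A_i^l`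
(each a divisibility constraint or an atomic Presburger formula) and let `X`, `Y`
be assignments over `ℕ`. Then `ξ_i(X,Y)` is true iff there is a simple
configuration `C` of `TA_{ξ_i}[X]` with `C(start_{A_i^1}) > 0` and `C(tᵢ) = Y(yᵢ)`
for all `i`, from which `end_{A_i^l}` can be covered. -/
theorem conjunction_gadget_correct {n m l : ℕ} (hl : 0 < l)
    (atoms : Fin l → Atom n m) (X : Fin n → ℕ) (Y : Fin m → ℕ) :
    (∀ a : Fin l, (atoms a).holds X Y) ↔
      ∃ C : Config l m, Simple C ∧ 0 < C.κ (⟨0, hl⟩, 0) ∧ (∀ i, C.t i = Y i) ∧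
        Covers atoms X C (⟨l - 1, Nat.sub_lt hl Nat.one_pos⟩, 2) := by

  constructor
  · intro hξ
    refine ⟨Sconf atoms X Y 0 hl, ⟨?_, ?_, ?_⟩, ?_, ?_, ?_⟩
    · simp [Config.valid, Sconf, Finset.sum_ite_eq']
    · intro a; simp [Sconf, vfun]
    · refine ⟨((⟨0, hl⟩ : Fin l), 0), ?_, ?_⟩
      · simpa [Sconf] using KK_pos atoms X Y
      · intro q' hq'; simp [Sconf, hq']
    · simpa [Sconf] using KK_pos atoms X Y
    · intro i; rfl
    · refine ⟨Econf atoms X Y (l - 1) (Nat.sub_lt hl Nat.one_pos), ?_, ?_⟩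
      · exact (chain atoms X Y hl hξ (l - 1) _).trans
          (segment atoms X Y hξ (l - 1) (Nat.sub_lt hl Nat.one_pos))
      · simpa [Econf] using KK_pos atoms X Y
  · rintro ⟨C, ⟨hval, hv0, q0, hq0pos, hq0⟩, hstart, ht, C', hreach, hcov⟩
    have hq0eq : q0 = ((⟨0, hl⟩ : Fin l), 0) := by
      rcases eq_or_ne ((⟨0, hl⟩ : Fin l), (0 : Fin 3)) q0 with he | hne
      · exact he.symm
      · exact absurd (hq0 _ hne) (by omega)
    have h0 : ∀ q : Fin l × Fin 3, 0 < C.κ q → q = ((⟨0, hl⟩ : Fin l), 0) := by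
      intro q hq
      by_contra hne
      have := hq0 q (by rw [hq0eq]; exact hne)
      omega
    obtain ⟨hb, h2⟩ := cover_invariant atoms X hl C h0 hreach
      ⟨l - 1, Nat.sub_lt hl Nat.one_pos⟩ 2 hcov
    intro a
    have hgood : ∃ D, Relation.ReflTransGen (Step atoms X) C D ∧ guardHolds atoms X a D := by
      rcases Nat.lt_or_ge (a : ℕ) (l - 1) with hc | hc
      · exact hb a hc
      · have haeq : a = (⟨l - 1, Nat.sub_lt hl Nat.one_pos⟩ : Fin l) := by
          have := a.isLt
          exact Fin.ext (by simp; omega)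
        rw [haeq]
        exact h2 rfl
    obtain ⟨D, hD, hg⟩ := hgood
    have hDt : D.t = Y := by
      funext i
      rw [reach_t hD]
      exact ht i
    cases hA : atoms a with
    | div j k =>
        rw [guard_div hA] at hg
        simp only [Atom.holds]
        exact ⟨D.d a, by rw [← hDt, ← hg.2, hg.1]⟩
    | cmp f g op =>
        rw [guard_cmp hA] at hg
        simp only [Atom.holds]
        rw [hDt] at hg
        rw [← hg.1]
        exact hg.2

end ThresholdAutomata
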